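/- arXiv:2311.02374 — 5 statements merged into one kernel-verified Lean document; each statement's English description precedes it below -/
import Mathlib

section
/- Let (Ω, 𝓕, (𝓕_n)_{n≥0}, ℙ) be a filtered probability space, let (γ_n)_{n≥1} be positive reals with Σ_n γ_n² = ∞, let S_0 ≥ 0 be an 𝓕_0-measurable random variable, let (Y_n)_{n≥1} be real random variables with each Y_n being 𝓕_n-measurable and |Y_n| ≤ C almost surely for a constant C, and set S_n := S_0 + Σ_{j=1}^n Y_j. Assume S_n ≥ 0 almost surely for all n, and that there exist c > 0 and N' ∈ ℕ such that for all n ≥ N', almost surely 𝔼[S_{n+1}² − S_n² | 𝓕_n] ≥ c γ_n². Then ℙ(lim_{n→∞} S_n = 0) = 0. -/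
/-!
Fix a level `r` and let `B` be the event that `X k ≤ r` for all `k ≥ N`. Switch off the
increments of `X²` from the first time after `N` at which `X` exceeds `r`; since the steps are at
most `C`, the switched increments telescope to at most `(r + C)²`. The switch at time `n` is
`ℱ n`-measurable and is still on over `B`, so by the drift condition the `n`-th switched increment
has expectation at least `μ(B) · b n` (with `b n = c γ n ^ 2`). Hence `μ(B) · ∑ b n ≤ (r + C)²`,
which forces `μ(B) = 0`; a path along which `X → 0` lies in such an event for `r = 1`.
-/

open MeasureTheory Filter Topology Finset

theorem Finset.sum_Ico_ite_sub_le {p : ℕ → Prop} [DecidablePred p] (hp : Antitone p)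
    {a : ℕ → ℝ} {K : ℝ} {N : ℕ} (hK : 0 ≤ K) (haN : 0 ≤ a N)
    (ha : ∀ j, N ≤ j → p j → a (j + 1) ≤ K) (n : ℕ) :
    ∑ j ∈ Ico N n, (if p j then a (j + 1) - a j else 0) ≤ K := by
  induction n with
  | zero => simpa using hK
  | succ n ih =>
    rcases lt_or_ge n N with hn | hn
    · rw [Ico_eq_empty (by omega), sum_empty]
      exact hK
    by_cases hpn : p n
    · calc ∑ j ∈ Ico N (n + 1), (if p j then a (j + 1) - a j else 0)
          = ∑ j ∈ Ico N (n + 1), (a (j + 1) - a j) :=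
            sum_congr rfl fun j hj => if_pos (hp (by simp at hj; omega) hpn)
        _ = a (n + 1) - a N := sum_Ico_sub a (by omega)
        _ ≤ K := by linarith [ha n hn hpn]
    · rw [sum_Ico_succ_top hn, if_neg hpn, add_zero]
      exact ih

namespace MeasureTheory

variable {Ω : Type*} {m0 : MeasurableSpace Ω} {μ : Measure Ω}

theorem integrable_of_le_condExp [NeZero μ] {m : MeasurableSpace Ω} {f : Ω → ℝ} {b : ℝ}
    (hb : 0 < b) (h : ∀ᵐ ω ∂μ, b ≤ μ[f | m] ω) : Integrable f μ := by
  by_contra hf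
  rw [condExp_of_not_integrable hf] at h
  obtain ⟨ω, hω⟩ := h.exists
  exact hb.not_ge hω

theorem measureReal_mul_le_integral_indicator [IsFiniteMeasure μ] {m : MeasurableSpace Ω}
    (hm : m ≤ m0) {f : Ω → ℝ} (hf : Integrable f μ) {b : ℝ} (hb : 0 ≤ b)
    (h : ∀ᵐ ω ∂μ, b ≤ μ[f | m] ω) {A B : Set Ω} (hA : MeasurableSet[m] A)
    (hB : MeasurableSet[m0] B) (hBA : B ⊆ A) :
    μ.real B * b ≤ ∫ ω, A.indicator f ω ∂μ := by
  calc μ.real B * b = ∫ ω, B.indicator (fun _ => b) ω ∂μ := by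
        rw [integral_indicator_const _ hB, smul_eq_mul]
    _ ≤ ∫ ω, A.indicator (μ[f | m]) ω ∂μ := by
        refine integral_mono_ae ((integrable_const b).indicator hB)
          (integrable_condExp.indicator (hm _ hA)) ?_
        filter_upwards [h] with ω hω
        exact (Set.indicator_le_indicator_of_subset hBA (fun _ => hb) ω).trans
          (Set.indicator_le_indicator hω)
    _ = ∫ ω, μ[A.indicator f | m] ω ∂μ := integral_congr_ae (condExp_indicator hf hA).symm
    _ = ∫ ω, A.indicator f ω ∂μ := integral_condExp hm

def stayBelow (X : ℕ → Ω → ℝ) (r : ℝ) (N n : ℕ) : Set Ω :=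
  {ω | ∀ k ∈ Set.Icc N n, X k ω ≤ r}

variable {X : ℕ → Ω → ℝ} {r : ℝ} {N : ℕ}

theorem stayBelow_antitone : Antitone (stayBelow X r N) :=
  fun _ _ hmn _ hω k hk => hω k ⟨hk.1, hk.2.trans hmn⟩

theorem measurableSet_stayBelow {ℱ : Filtration ℕ m0} (hX : Adapted ℱ X) (n : ℕ) :
    MeasurableSet[ℱ n] (stayBelow X r N n) := by
  simp only [stayBelow, Set.ofPred_forall]
  exact .iInter fun k => .iInter fun hk =>
    measurableSet_le ((hX k).mono (ℱ.mono hk.2) le_rfl) measurable_const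

theorem setOf_forall_le_subset_stayBelow (n : ℕ) :
    {ω | ∀ k, N ≤ k → X k ω ≤ r} ⊆ stayBelow X r N n :=
  fun _ hω k hk => hω k hk.1

theorem sum_indicator_stayBelow_le {C : ℝ} {ω : Ω} (hX0 : ∀ n, 0 ≤ X n ω)
    (hinc : ∀ n, X (n + 1) ω ≤ X n ω + C) (n : ℕ) :
    ∑ j ∈ Ico N n, (stayBelow X r N j).indicator
      (fun ω => X (j + 1) ω ^ 2 - X j ω ^ 2) ω ≤ (r + C) ^ 2 := by
  classical
  simp only [Set.indicator_apply]
  refine sum_Ico_ite_sub_le (p := fun j => ω ∈ stayBelow X r N j)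
    (a := fun j => X j ω ^ 2) (fun _ _ hij hω => stayBelow_antitone hij hω)
    (sq_nonneg _) (sq_nonneg _) (fun j hj hω => ?_) n
  have hj : X j ω ≤ r := hω j ⟨hj, le_rfl⟩
  exact pow_le_pow_left₀ (hX0 _) (by linarith [hinc j]) 2

theorem measure_forall_le_eq_zero [IsFiniteMeasure μ] {ℱ : Filtration ℕ m0} (hX : Adapted ℱ X)
    (hX0 : ∀ n, ∀ᵐ ω ∂μ, 0 ≤ X n ω) {C : ℝ} (hinc : ∀ n, ∀ᵐ ω ∂μ, X (n + 1) ω ≤ X n ω + C)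
    {b : ℕ → ℝ} (hb0 : ∀ n, 0 ≤ b n) (hb : ¬Summable b)
    (hint : ∀ n, N ≤ n → Integrable (fun ω => X (n + 1) ω ^ 2 - X n ω ^ 2) μ)
    (hdrift : ∀ n, N ≤ n →
      ∀ᵐ ω ∂μ, b n ≤ μ[fun ω => X (n + 1) ω ^ 2 - X n ω ^ 2 | ℱ n] ω) :
    μ {ω | ∀ k, N ≤ k → X k ω ≤ r} = 0 := by
  set B := {ω | ∀ k, N ≤ k → X k ω ≤ r}
  have hB : MeasurableSet B := by
    simp only [B, Set.ofPred_forall]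
    exact .iInter fun k => .iInter fun _ =>
      measurableSet_le ((hX k).mono (ℱ.le k) le_rfl) measurable_const
  by_contra hμB
  have hBpos : 0 < μ.real B := ENNReal.toReal_pos hμB (measure_ne_top μ B)
  have hbounded : ∀ n, μ.real B * ∑ j ∈ Ico N n, b j ≤ μ.real Set.univ * (r + C) ^ 2 := by
    intro n
    have hint' : ∀ j ∈ Ico N n, Integrable ((stayBelow X r N j).indicator
        (fun ω => X (j + 1) ω ^ 2 - X j ω ^ 2)) μ := fun j hj =>
      (hint j (mem_Ico.1 hj).1).indicator (ℱ.le j _ (measurableSet_stayBelow hX j))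
    calc μ.real B * ∑ j ∈ Ico N n, b j
        = ∑ j ∈ Ico N n, μ.real B * b j := mul_sum _ _ _
      _ ≤ ∑ j ∈ Ico N n, ∫ ω, (stayBelow X r N j).indicator
            (fun ω => X (j + 1) ω ^ 2 - X j ω ^ 2) ω ∂μ :=
          sum_le_sum fun j hj => measureReal_mul_le_integral_indicator (ℱ.le j)
            (hint j (mem_Ico.1 hj).1) (hb0 j) (hdrift j (mem_Ico.1 hj).1)
            (measurableSet_stayBelow hX j) hB (setOf_forall_le_subset_stayBelow j)
      _ = ∫ ω, ∑ j ∈ Ico N n, (stayBelow X r N j).indicator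
            (fun ω => X (j + 1) ω ^ 2 - X j ω ^ 2) ω ∂μ := (integral_finsetSum _ hint').symm
      _ ≤ ∫ _, (r + C) ^ 2 ∂μ := by
          refine integral_mono_ae (integrable_finsetSum _ hint') (integrable_const _) ?_
          filter_upwards [ae_all_iff.2 hX0, ae_all_iff.2 hinc] with ω hω0 hωinc
          exact sum_indicator_stayBelow_le hω0 hωinc n
      _ = μ.real Set.univ * (r + C) ^ 2 := by rw [integral_const, smul_eq_mul]
  refine hb ((summable_nat_add_iff N).1 (summable_of_sum_range_le (fun n => hb0 _)
    (c := μ.real Set.univ * (r + C) ^ 2 / μ.real B) fun n => ?_))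
  rw [range_eq_Ico, sum_Ico_add', zero_add, le_div_iff₀' hBpos]
  exact hbounded (n + N)

end MeasureTheory

open MeasureTheory

theorem stmt_1_general
    {Ω : Type*} {m0 : MeasurableSpace Ω} {μ : Measure Ω} [IsProbabilityMeasure μ]
    (ℱ : Filtration ℕ m0)
    (γ : ℕ → ℝ) (hγpos : ∀ n, 1 ≤ n → 0 < γ n)
    (hγ2 : ¬ Summable (fun n => γ n ^ 2))
    (S0 : Ω → ℝ) (hS0meas : Measurable[ℱ 0] S0)
    (Y : ℕ → Ω → ℝ) (hYmeas : ∀ n, 1 ≤ n → Measurable[ℱ n] (Y n))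
    (C : ℝ) (hYbound : ∀ n, 1 ≤ n → ∀ᵐ ω ∂μ, |Y n ω| ≤ C)
    (S : ℕ → Ω → ℝ)
    (hSdef : ∀ n ω, S n ω = S0 ω + ∑ j ∈ Finset.Icc 1 n, Y j ω)
    (hSnonneg : ∀ n, ∀ᵐ ω ∂μ, 0 ≤ S n ω)
    (c : ℝ) (hc : 0 < c) (N' : ℕ)
    (hS2 : ∀ n, N' ≤ n →
      ∀ᵐ ω ∂μ, c * γ n ^ 2 ≤ (μ[fun ω' => S (n + 1) ω' ^ 2 - S n ω' ^ 2 | ℱ n]) ω) :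
    μ {ω | Tendsto (fun n => S n ω) atTop (𝓝 0)} = 0 := by
  have hS : Adapted ℱ S := fun n => by
    rw [funext (hSdef n)]
    exact (hS0meas.mono (ℱ.mono n.zero_le) le_rfl).add <| Finset.measurable_sum _ fun j hj =>
      (hYmeas j (Finset.mem_Icc.1 hj).1).mono (ℱ.mono (Finset.mem_Icc.1 hj).2) le_rfl
  have hinc : ∀ n, ∀ᵐ ω ∂μ, S (n + 1) ω ≤ S n ω + C := fun n =>
    (hYbound (n + 1) le_add_self).mono fun ω hω => by
      rw [hSdef, hSdef, Finset.sum_Icc_succ_top le_add_self]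
      linarith [le_abs_self (Y (n + 1) ω)]
  have hnull : ∀ N, max N' 1 ≤ N → μ {ω | ∀ k, N ≤ k → S k ω ≤ 1} = 0 := fun N hN =>
    measure_forall_le_eq_zero hS hSnonneg hinc (fun n => by positivity)
      ((summable_mul_left_iff hc.ne').not.2 hγ2)
      (fun n hn => integrable_of_le_condExp
        (mul_pos hc (pow_pos (hγpos n (by omega)) 2)) (hS2 n (by omega)))
      (fun n hn => hS2 n (by omega))
  refine measure_mono_null (fun ω hω => ?_) (measure_iUnion_null fun M => hnull (M + max N' 1)
    le_add_self)
  obtain ⟨M, hM⟩ := eventually_atTop.1 (hω.eventually_le_const one_pos)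
  exact Set.mem_iUnion.2 ⟨M, fun k hk => hM k (by omega)⟩

/-- Lemma B.2: nonconvergence of the nonnegative process `S n` to `0` in the
non-square-summable step-size case. -/
theorem stmt_1
    {Ω : Type*} {m0 : MeasurableSpace Ω} {μ : Measure Ω} [IsProbabilityMeasure μ]
    (ℱ : Filtration ℕ m0)
    (γ : ℕ → ℝ) (hγpos : ∀ n, 1 ≤ n → 0 < γ n)
    (hγ2 : ¬ Summable (fun n => γ n ^ 2))
    (S0 : Ω → ℝ) (hS0meas : Measurable[ℱ 0] S0) (hS0 : ∀ᵐ ω ∂μ, 0 ≤ S0 ω)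
    (Y : ℕ → Ω → ℝ) (hYmeas : ∀ n, 1 ≤ n → Measurable[ℱ n] (Y n))
    (C : ℝ) (hYbound : ∀ n, 1 ≤ n → ∀ᵐ ω ∂μ, |Y n ω| ≤ C)
    (S : ℕ → Ω → ℝ)
    (hSdef : ∀ n ω, S n ω = S0 ω + ∑ j ∈ Finset.Icc 1 n, Y j ω)
    (hSnonneg : ∀ n, ∀ᵐ ω ∂μ, 0 ≤ S n ω)
    (c : ℝ) (hc : 0 < c) (N' : ℕ)
    (hS2 : ∀ n, N' ≤ n →
      ∀ᵐ ω ∂μ, c * γ n ^ 2 ≤ (μ[fun ω' => S (n + 1) ω' ^ 2 - S n ω' ^ 2 | ℱ n]) ω) :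
    μ {ω | Tendsto (fun n => S n ω) atTop (𝓝 0)} = 0 :=
  stmt_1_general ℱ γ hγpos hγ2 S0 hS0meas Y hYmeas C hYbound S hSdef hSnonneg c hc N' hS2
end

section
/- Let (ξ_n)_{n≥1} be a σ-bounded martingale-difference sequence in ℝ^d with respect to a filtration (𝓕_n), and let (γ_n)_{n≥1} be a sequence in (0,1] such that Σ_n γ_n = ∞ and Σ_n λ^{1/γ_n} < ∞ for every λ ∈ (0,1). Define τ_n := Σ_{j=1}^{n−1} γ_j. Then for every T > 0, almost surely lim_{n→∞} sup{ ‖ Σ_{j=n}^{m−1} γ_j ξ_j ‖ : m ≥ n and τ_m − τ_n ≤ T } = 0; that is, the accumulated weighted noise over every time window of effective length at most T vanishes almost surely. -/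
open MeasureTheory Filter Topology

/-!
Cut the indices into consecutive blocks `[N k, N (k + 1))` of total step size between `T` and
`T + 1`; a window of total step size at most `T` starting in block `k` ends inside block `k + 1`.
On a double block each coordinate of the noise sum is a martingale with increments bounded by
`γ j * σ`, so `exp (θ S)` is a submartingale of mean at most `exp (θ ^ 2 * σ ^ 2 * ∑ γ j ^ 2)`,
and Doob's maximal inequality bounds the probability that some partial sum exceeds `δ`.
Taking `θ` inversely proportional to the largest step `γ g` of the block turns this bound into
`l ^ (1 / γ g)` for a fixed `l ∈ (0, 1)`, which is summable over the blocks by the step-size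
assumption; Borel–Cantelli concludes.
-/

open ProbabilityTheory Finset Real
open scoped NNReal

section StepSizes

variable {γ : ℕ → ℝ}

lemma tendsto_sum_Ico_atTop {a : ℕ} (hγ : ∀ n, a ≤ n → 0 ≤ γ n) (hγdiv : ¬ Summable γ) :
    Tendsto (fun b => ∑ j ∈ Ico a b, γ j) atTop atTop := by
  have hshift : ¬ Summable fun k => γ (a + k) := by
    simpa only [add_comm a] using (summable_nat_add_iff a).not.2 hγdiv
  simp_rw [sum_Ico_eq_sum_range]
  exact ((not_summable_iff_tendsto_nat_atTop_of_nonneg fun k => hγ _ le_self_add).1 hshift).comp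
    (tendsto_sub_atTop_nat a)

/-- Take the first `b` past which the accumulated step size exceeds `T`: it overshoots by a single
step, which is at most `1`. -/
lemma exists_sum_Ico_mem_Ioc {a : ℕ} (hγ : ∀ n, a ≤ n → γ n ∈ Set.Ioc 0 1)
    (hγdiv : ¬ Summable γ) {T : ℝ} (hT : 0 ≤ T) :
    ∃ b, a < b ∧ T < ∑ j ∈ Ico a b, γ j ∧ ∑ j ∈ Ico a b, γ j ≤ T + 1 := by
  classical
  have hex : ∃ b, a < b ∧ T < ∑ j ∈ Ico a b, γ j :=
    (((tendsto_sum_Ico_atTop fun n hn => (hγ n hn).1.le) hγdiv).eventually_gt_atTop T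
      |>.and (eventually_gt_atTop a)).exists.imp fun _ h => h.symm
  obtain ⟨hab, hT_lt⟩ := Nat.find_spec hex
  refine ⟨Nat.find hex, hab, hT_lt, ?_⟩
  have hprev : ∑ j ∈ Ico a (Nat.find hex - 1), γ j ≤ T := by
    by_cases h : a < Nat.find hex - 1
    · exact not_lt.1 fun h' => Nat.find_min hex (Nat.sub_one_lt_of_lt hab) ⟨h, h'⟩
    · rwa [Ico_eq_empty (by omega), sum_empty]
  have hsplit := sum_Ico_succ_top (show a ≤ Nat.find hex - 1 by omega) γ
  rw [Nat.sub_add_cancel (by omega)] at hsplit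
  linarith [(hγ (Nat.find hex - 1) (by omega)).2]

lemma exists_blocks (hγ : ∀ n, 1 ≤ n → γ n ∈ Set.Ioc 0 1) (hγdiv : ¬ Summable γ) {T : ℝ}
    (hT : 0 ≤ T) :
    ∃ N : ℕ → ℕ, StrictMono N ∧ 1 ≤ N 0 ∧ ∀ k,
      T < ∑ j ∈ Ico (N k) (N (k + 1)), γ j ∧ ∑ j ∈ Ico (N k) (N (k + 1)), γ j ≤ T + 1 := by
  choose! next hnext using fun a (ha : 1 ≤ a) =>
    exists_sum_Ico_mem_Ioc (fun n hn => hγ n (ha.trans hn)) hγdiv hT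
  have hN : ∀ k, 1 ≤ next^[k] 1 := by
    intro k
    induction k with
    | zero => exact le_rfl
    | succ k ih => rw [Function.iterate_succ_apply']; exact ih.trans (hnext _ ih).1.le
  refine ⟨fun k => next^[k] 1, strictMono_nat_of_lt_succ fun k => ?_, le_rfl, fun k => ?_⟩ <;>
    simp only [Function.iterate_succ_apply']
  exacts [(hnext _ (hN k)).1, (hnext _ (hN k)).2]

/-- The window `[n, m)` cannot contain the whole block after the one containing `n`, whose total
step size exceeds `T`. -/
lemma exists_block_of_sum_Ico_le {N : ℕ → ℕ} (hN : StrictMono N) (hγ : ∀ n, N 0 ≤ n → 0 ≤ γ n)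
    {T : ℝ} (hgap : ∀ k, T < ∑ j ∈ Ico (N k) (N (k + 1)), γ j) {K n m : ℕ} (hn : N K ≤ n)
    (hwin : ∑ j ∈ Ico n m, γ j ≤ T) :
    ∃ k, K ≤ k ∧ N k ≤ n ∧ n ≤ N (k + 2) ∧ m ≤ N (k + 2) := by
  have hcover := iUnion_Ico_map_succ_eq_Ici (fun k => hN.monotone (Nat.zero_le k))
    hN.not_bddAbove_range_of_wellFoundedLT
  obtain ⟨k, hk, hnk⟩ := Set.mem_iUnion.1 (hcover.symm ▸ (hN.monotone (Nat.zero_le K)).trans hn :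
    n ∈ ⋃ k, Set.Ico (N k) (N (Order.succ k)))
  rw [Order.succ_eq_add_one] at hnk
  have hKk : K ≤ k := by
    by_contra h
    exact absurd (hn.trans_lt hnk) (not_lt.2 (hN.monotone (by omega)))
  refine ⟨k, hKk, hk, (hnk.trans (hN (by omega))).le, not_lt.1 fun hm => ?_⟩
  have hsub : Ico (N (k + 1)) (N (k + 2)) ⊆ Ico n m := Ico_subset_Ico hnk.le hm.le
  have := sum_le_sum_of_subset_of_nonneg hsub fun j hj _ =>
    hγ j ((hN.monotone (Nat.zero_le k)).trans (hk.trans (mem_Ico.1 hj).1))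
  linarith [hgap (k + 1)]

lemma summable_sum_Ico_of_monotone {f : ℕ → ℝ} (hf0 : ∀ n, 0 ≤ f n) (hf : Summable f) {N : ℕ → ℕ}
    (hN : Monotone N) : Summable fun k => ∑ j ∈ Ico (N k) (N (k + 1)), f j := by
  have htelescope : ∀ K, ∑ k ∈ range K, ∑ j ∈ Ico (N k) (N (k + 1)), f j
      = ∑ j ∈ Ico (N 0) (N K), f j := by
    intro K
    induction K with
    | zero => simp
    | succ K ih =>
      rw [sum_range_succ, ih, sum_Ico_consecutive _ (hN (Nat.zero_le K)) (hN K.le_succ)]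
  refine summable_of_sum_range_le (c := ∑' j, f j) (fun k => sum_nonneg fun j _ => hf0 j)
    fun K => ?_
  rw [htelescope]
  exact hf.sum_le_tsum _ fun j _ => hf0 j

end StepSizes

section ConditionalExpectation

variable {Ω : Type*} {m m0 : MeasurableSpace Ω} {μ : Measure Ω} [IsFiniteMeasure μ]
  {η : Ω → ℝ} {σ : ℝ}

lemma condExp_const_add_mul_ae_eq (hm : m ≤ m0) (hη : Integrable η μ) (h0 : μ[η|m] =ᵐ[μ] 0)
    (a c : ℝ) : μ[fun ω => a + c * η ω|m] =ᵐ[μ] fun _ => a := by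
  change μ[(fun _ => a) + c • η|m] =ᵐ[μ] _
  filter_upwards [condExp_add (integrable_const a) (hη.smul c) m, condExp_smul c η m, h0]
    with ω hadd hsmul h0ω
  simp only [Pi.add_apply, Pi.smul_apply, Pi.zero_apply, smul_eq_mul] at hadd hsmul h0ω
  rw [hadd, condExp_const hm, hsmul, h0ω, mul_zero, add_zero]

lemma integrable_exp_mul_of_abs_le (hη : AEMeasurable η μ) (hbd : ∀ᵐ ω ∂μ, |η ω| ≤ σ) (c : ℝ) :
    Integrable (fun ω => exp (c * η ω)) μ :=
  integrable_exp_mul_of_mem_Icc hη (hbd.mono fun _ h => abs_le.1 h)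

lemma one_le_condExp_exp_mul (hm : m ≤ m0) (hη : AEMeasurable η μ) (hbd : ∀ᵐ ω ∂μ, |η ω| ≤ σ)
    (h0 : μ[η|m] =ᵐ[μ] 0) (c : ℝ) : (fun _ => 1) ≤ᵐ[μ] μ[fun ω => exp (c * η ω)|m] := by
  have hint : Integrable η μ := .of_bound hη.aestronglyMeasurable σ (by simpa using hbd)
  refine (condExp_const_add_mul_ae_eq hm hint h0 1 c).symm.le.trans
    (condExp_mono ((integrable_const 1).add (hint.const_mul c))
      (integrable_exp_mul_of_abs_le hη hbd c) (ae_of_all _ fun ω => ?_))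
  linarith [add_one_le_exp (c * η ω)]

/-- Conditional form of `exp x ≤ 1 + x + x ^ 2` for `|x| ≤ 1`. -/
lemma condExp_exp_mul_le (hm : m ≤ m0) (hη : AEMeasurable η μ) (hbd : ∀ᵐ ω ∂μ, |η ω| ≤ σ)
    (h0 : μ[η|m] =ᵐ[μ] 0) {c : ℝ} (hc : |c| * σ ≤ 1) :
    μ[fun ω => exp (c * η ω)|m] ≤ᵐ[μ] fun _ => 1 + c ^ 2 * σ ^ 2 := by
  have hint : Integrable η μ := .of_bound hη.aestronglyMeasurable σ (by simpa using hbd)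
  have hpt : ∀ᵐ ω ∂μ, exp (c * η ω) ≤ (1 + c ^ 2 * σ ^ 2) + c * η ω := by
    filter_upwards [hbd] with ω hω
    have hcη : |c * η ω| ≤ |c| * σ := by rw [abs_mul]; gcongr
    have hsq : (c * η ω) ^ 2 ≤ c ^ 2 * σ ^ 2 := by
      simpa only [sq_abs, mul_pow] using pow_le_pow_left₀ (abs_nonneg _) hcη 2
    linarith [(abs_le.1 (abs_exp_sub_one_sub_id_le (hcη.trans hc))).2]
  exact (condExp_mono (integrable_exp_mul_of_abs_le hη hbd c)
    ((integrable_const _).add (hint.const_mul c)) hpt).trans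
    (condExp_const_add_mul_ae_eq hm hint h0 _ c).le

end ConditionalExpectation

lemma condExp_comp_clm_ae_eq_zero {Ω E F : Type*} {m m0 : MeasurableSpace Ω} {μ : Measure Ω}
    [NormedAddCommGroup E] [NormedSpace ℝ E] [CompleteSpace E]
    [NormedAddCommGroup F] [NormedSpace ℝ F] [CompleteSpace F]
    {f : Ω → E} (hf : Integrable f μ) (h0 : μ[f|m] =ᵐ[μ] 0) (L : E →L[ℝ] F) :
    μ[fun ω => L (f ω)|m] =ᵐ[μ] 0 := by
  filter_upwards [(L.comp_condExp_comm hf).symm, h0] with ω hL hω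
  simp only [Function.comp_apply, Pi.zero_apply] at hL hω ⊢
  rw [← Function.comp_def, hL, hω, map_zero]

section ExponentialMaximalInequality

variable {Ω : Type*} {m0 : MeasurableSpace Ω} {μ : Measure Ω} [IsProbabilityMeasure μ]
  {𝒢 : Filtration ℕ m0} {Y : ℕ → Ω → ℝ} {c : ℕ → ℝ} {θ : ℝ}

noncomputable def expPartialSum (θ : ℝ) (Y : ℕ → Ω → ℝ) (t : ℕ) (ω : Ω) : ℝ :=
  exp (θ * ∑ i ∈ range t, Y i ω)

lemma expPartialSum_succ (θ : ℝ) (Y : ℕ → Ω → ℝ) (t : ℕ) :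
    expPartialSum θ Y (t + 1) = fun ω => expPartialSum θ Y t ω * exp (θ * Y t ω) := by
  funext ω
  simp only [expPartialSum, sum_range_succ, mul_add, exp_add]

lemma measurable_expPartialSum (hY : ∀ i, Measurable[𝒢 (i + 1)] (Y i)) (t : ℕ) :
    Measurable[𝒢 t] (expPartialSum θ Y t) :=
  measurable_exp.comp <| (Finset.measurable_sum _ fun i hi =>
    (hY i).mono (𝒢.mono (mem_range.1 hi)) le_rfl).const_mul θ

variable (hY : ∀ i, Measurable[𝒢 (i + 1)] (Y i)) (hYc : ∀ i, ∀ᵐ ω ∂μ, |Y i ω| ≤ c i)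
include hY hYc

lemma integrable_expPartialSum (t : ℕ) : Integrable (expPartialSum θ Y t) μ := by
  refine .of_bound ((measurable_expPartialSum hY t).mono (𝒢.le t) le_rfl).aestronglyMeasurable
    (exp (|θ| * ∑ i ∈ range t, c i)) ?_
  filter_upwards [ae_all_iff.2 hYc] with ω hω
  rw [Real.norm_eq_abs, expPartialSum, abs_exp, exp_le_exp]
  refine (le_abs_self _).trans ?_
  rw [abs_mul]
  gcongr
  exact (abs_sum_le_sum_abs _ _).trans (sum_le_sum fun i _ => hω i)

lemma condExp_expPartialSum_succ (t : ℕ) :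
    μ[expPartialSum θ Y (t + 1)|𝒢 t]
      =ᵐ[μ] fun ω => expPartialSum θ Y t ω * μ[fun ω => exp (θ * Y t ω)|𝒢 t] ω := by
  rw [expPartialSum_succ]
  exact condExp_mul_of_stronglyMeasurable_left (measurable_expPartialSum hY t).stronglyMeasurable
    (by have h := integrable_expPartialSum hY hYc (θ := θ) (t + 1)
        rw [expPartialSum_succ] at h
        exact h)
    (integrable_exp_mul_of_abs_le ((hY t).mono (𝒢.le _) le_rfl).aemeasurable (hYc t) θ)

variable (hY0 : ∀ i, μ[Y i|𝒢 i] =ᵐ[μ] 0)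
include hY0

lemma submartingale_expPartialSum : Submartingale (expPartialSum θ Y) 𝒢 μ := by
  refine submartingale_nat (fun t => (measurable_expPartialSum hY t).stronglyMeasurable)
    (integrable_expPartialSum hY hYc) fun t => ?_
  filter_upwards [condExp_expPartialSum_succ hY hYc t,
    one_le_condExp_exp_mul (𝒢.le t) ((hY t).mono (𝒢.le _) le_rfl).aemeasurable (hYc t) (hY0 t) θ]
    with ω hcond hone
  rw [hcond]
  exact le_mul_of_one_le_right (exp_pos _).le hone

lemma integral_expPartialSum_le {L : ℕ} (hθc : ∀ i < L, |θ| * c i ≤ 1) :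
    ∫ ω, expPartialSum θ Y L ω ∂μ ≤ exp (θ ^ 2 * ∑ i ∈ range L, c i ^ 2) := by
  induction L with
  | zero => simp [expPartialSum]
  | succ L ih =>
    have hstep : ∫ ω, expPartialSum θ Y (L + 1) ω ∂μ
        ≤ (∫ ω, expPartialSum θ Y L ω ∂μ) * (1 + θ ^ 2 * c L ^ 2) := by
      rw [← integral_condExp (𝒢.le L), ← integral_mul_const]
      refine integral_mono_ae integrable_condExp
        ((integrable_expPartialSum hY hYc L).mul_const _) ?_
      filter_upwards [condExp_expPartialSum_succ hY hYc L,
        condExp_exp_mul_le (𝒢.le L) ((hY L).mono (𝒢.le _) le_rfl).aemeasurable (hYc L) (hY0 L)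
          (hθc L L.lt_succ_self)] with ω hcond hle
      rw [hcond]
      exact mul_le_mul_of_nonneg_left hle (exp_pos _).le
    calc ∫ ω, expPartialSum θ Y (L + 1) ω ∂μ
        ≤ exp (θ ^ 2 * ∑ i ∈ range L, c i ^ 2) * exp (θ ^ 2 * c L ^ 2) := by
          refine hstep.trans (mul_le_mul (ih fun i hi => hθc i (hi.trans L.lt_succ_self))
            ?_ (by positivity) (exp_pos _).le)
          linarith [add_one_le_exp (θ ^ 2 * c L ^ 2)]
      _ = exp (θ ^ 2 * ∑ i ∈ range (L + 1), c i ^ 2) := by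
          rw [← exp_add, sum_range_succ, mul_add]

/-- Doob's maximal inequality for the submartingale `expPartialSum θ Y`. -/
lemma measure_exists_sum_range_gt_le {L : ℕ} (hθ : 0 < θ) (hθc : ∀ i < L, θ * c i ≤ 1)
    (ε : ℝ) :
    μ {ω | ∃ t ≤ L, ε < ∑ i ∈ range t, Y i ω}
      ≤ ENNReal.ofReal (exp (-(θ * ε) + θ ^ 2 * ∑ i ∈ range L, c i ^ 2)) := by
  set W := expPartialSum θ Y
  set r : ℝ≥0 := (exp (θ * ε)).toNNReal
  have hr : (r : ℝ) = exp (θ * ε) := Real.coe_toNNReal _ (exp_pos _).le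
  have hsub : {ω | ∃ t ≤ L, ε < ∑ i ∈ range t, Y i ω}
      ⊆ {ω | (r : ℝ) ≤ (range (L + 1)).sup' nonempty_range_add_one fun t => W t ω} := by
    rintro ω ⟨t, htL, ht⟩
    refine le_trans ?_ (le_sup' (fun t => W t ω) (mem_range.2 (Nat.lt_succ_of_le htL)))
    rw [hr]
    exact exp_le_exp.2 (mul_le_mul_of_nonneg_left ht.le hθ.le)
  have hdoob := maximal_ineq (submartingale_expPartialSum hY hYc hY0 (θ := θ))
    (fun t ω => (exp_pos _).le) (ε := r) L
  have hint : ∫ ω in {ω | (r : ℝ) ≤ (range (L + 1)).sup' nonempty_range_add_one fun t => W t ω},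
      W L ω ∂μ ≤ exp (θ ^ 2 * ∑ i ∈ range L, c i ^ 2) :=
    (setIntegral_le_integral (integrable_expPartialSum hY hYc L)
      (ae_of_all _ fun ω => (exp_pos _).le)).trans
      (integral_expPartialSum_le hY hYc hY0 fun i hi => by rw [abs_of_pos hθ]; exact hθc i hi)
  calc μ {ω | ∃ t ≤ L, ε < ∑ i ∈ range t, Y i ω}
      ≤ ENNReal.ofReal (exp (θ ^ 2 * ∑ i ∈ range L, c i ^ 2)) / ENNReal.ofReal (exp (θ * ε)) := by
        rw [ENNReal.le_div_iff_mul_le (by simp [exp_pos]) (by simp), mul_comm]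
        refine le_trans ?_ (hdoob.trans (ENNReal.ofReal_le_ofReal hint))
        gcongr
        exact le_rfl
    _ = ENNReal.ofReal (exp (-(θ * ε) + θ ^ 2 * ∑ i ∈ range L, c i ^ 2)) := by
        rw [← ENNReal.ofReal_div_of_pos (exp_pos _), ← exp_sub, neg_add_eq_sub]

lemma measure_exists_abs_sum_range_gt_le {L : ℕ} (hθ : 0 < θ) (hθc : ∀ i < L, θ * c i ≤ 1)
    (ε : ℝ) :
    μ {ω | ∃ t ≤ L, ε < |∑ i ∈ range t, Y i ω|}
      ≤ 2 * ENNReal.ofReal (exp (-(θ * ε) + θ ^ 2 * ∑ i ∈ range L, c i ^ 2)) := by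
  have hneg := measure_exists_sum_range_gt_le (Y := fun i => -Y i) (fun i => (hY i).neg)
    (fun i => by simpa using hYc i)
    (fun i => (condExp_neg (Y i) _).trans (by filter_upwards [hY0 i] with ω h; simp [h]))
    hθ hθc ε
  calc μ {ω | ∃ t ≤ L, ε < |∑ i ∈ range t, Y i ω|}
      ≤ μ ({ω | ∃ t ≤ L, ε < ∑ i ∈ range t, Y i ω}
          ∪ {ω | ∃ t ≤ L, ε < ∑ i ∈ range t, (-Y i) ω}) := by
        refine measure_mono fun ω ⟨t, htL, ht⟩ => ?_
        rcases lt_abs.1 ht with h | h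
        · exact Or.inl ⟨t, htL, h⟩
        · exact Or.inr ⟨t, htL, by simpa [sum_neg_distrib] using h⟩
    _ ≤ _ := (measure_union_le _ _).trans ((add_le_add
        (measure_exists_sum_range_gt_le hY hYc hY0 hθ hθc ε) hneg).trans_eq (two_mul _).symm)

end ExponentialMaximalInequality

lemma exists_lt_abs_apply_of_card_mul_lt_norm {ι : Type*} [Fintype ι] {v : EuclideanSpace ℝ ι}
    {δ : ℝ} (h : Fintype.card ι * δ < ‖v‖) : ∃ i, δ < |v i| := by
  by_contra! hle
  have hnorm : ‖v‖ ≤ ∑ i, |v i| := by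
    conv_lhs => rw [← (EuclideanSpace.basisFun ι ℝ).sum_repr v]
    refine (norm_sum_le _ _).trans (le_of_eq ?_)
    simp [norm_smul]
  have := hnorm.trans (sum_le_sum fun i _ => hle i)
  simp only [sum_const, card_univ, nsmul_eq_mul] at this
  linarith

def MeasureTheory.Filtration.shift {Ω : Type*} {m0 : MeasurableSpace Ω} (ℱ : Filtration ℕ m0)
    (a : ℕ) : Filtration ℕ m0 where
  seq t := ℱ (a + t)
  mono' _ _ h := ℱ.mono (Nat.add_le_add_left h a)
  le' t := ℱ.le (a + t)

section MartingaleDifferences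

variable {Ω : Type*} {m0 : MeasurableSpace Ω} {μ : Measure Ω} [IsProbabilityMeasure μ]
  (ℱ : Filtration ℕ m0)

lemma measure_exists_abs_sum_Ico_gt_le {ζ : ℕ → Ω → ℝ} {c : ℕ → ℝ}
    (hζ : ∀ n, 1 ≤ n → Measurable[ℱ n] (ζ n)) (hζ0 : ∀ n, μ[ζ (n + 1)|ℱ n] =ᵐ[μ] 0)
    (hζc : ∀ n, 1 ≤ n → ∀ᵐ ω ∂μ, |ζ n ω| ≤ c n) {s e : ℕ} (hs : 1 ≤ s) {θ : ℝ} (hθ : 0 < θ)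
    (hθc : ∀ j ∈ Ico s e, θ * c j ≤ 1) (ε : ℝ) :
    μ {ω | ∃ m ∈ Icc s e, ε < |∑ j ∈ Ico s m, ζ j ω|}
      ≤ 2 * ENNReal.ofReal (exp (-(θ * ε) + θ ^ 2 * ∑ j ∈ Ico s e, c j ^ 2)) := by
  obtain ⟨a, rfl⟩ : ∃ a, s = a + 1 := ⟨s - 1, by omega⟩
  have hreindex : ∀ (f : ℕ → ℝ) m,
      ∑ j ∈ Ico (a + 1) m, f j = ∑ t ∈ range (m - (a + 1)), f (a + t + 1) := fun f m => by
    simp only [sum_Ico_eq_sum_range, add_right_comm]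
  rw [hreindex]
  refine le_trans (measure_mono ?_) (measure_exists_abs_sum_range_gt_le (𝒢 := ℱ.shift a)
    (Y := fun t => ζ (a + t + 1)) (c := fun t => c (a + t + 1)) (fun t => hζ _ (by omega))
    (fun t => hζc _ (by omega)) (fun t => hζ0 (a + t)) hθ
    (fun t ht => hθc _ (mem_Ico.2 ⟨by omega, by omega⟩)) ε)
  rintro ω ⟨m, hm, hgt⟩
  rw [mem_Icc] at hm
  exact ⟨m - (a + 1), by omega, by rwa [hreindex (fun j => ζ j ω)] at hgt⟩

variable {d : ℕ} {ξ : ℕ → Ω → EuclideanSpace ℝ (Fin d)} {σ : ℝ}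
  (hmeas : ∀ n, 1 ≤ n → Measurable[ℱ n] (ξ n)) (hmean : ∀ n : ℕ, μ[ξ (n + 1)|ℱ n] =ᵐ[μ] 0)
  (hbdd : ∀ n, 1 ≤ n → ∀ᵐ ω ∂μ, ‖ξ n ω‖ ≤ σ)
include hmeas hmean hbdd

/-- A union bound over the `d` coordinates of `ξ`, each a real martingale difference sequence
bounded by `σ`. -/
lemma measure_exists_norm_sum_Ico_gt_le (γ : ℕ → ℝ) {s e : ℕ} (hs : 1 ≤ s) {θ : ℝ}
    (hθ : 0 < θ) (hθγ : ∀ j ∈ Ico s e, θ * (|γ j| * σ) ≤ 1) (δ : ℝ) :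
    μ {ω | ∃ m ∈ Icc s e, d * δ < ‖∑ j ∈ Ico s m, γ j • ξ j ω‖}
      ≤ 2 * d * ENNReal.ofReal (exp (-(θ * δ) + θ ^ 2 * σ ^ 2 * ∑ j ∈ Ico s e, γ j ^ 2)) := by
  have hcoord : ∀ i : Fin d, μ {ω | ∃ m ∈ Icc s e, δ < |∑ j ∈ Ico s m, γ j * ξ j ω i|}
      ≤ 2 * ENNReal.ofReal (exp (-(θ * δ) + θ ^ 2 * σ ^ 2 * ∑ j ∈ Ico s e, γ j ^ 2)) := by
    intro i
    have hint : ∀ n, 1 ≤ n → Integrable (ξ n) μ := fun n hn =>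
      .of_bound ((hmeas n hn).mono (ℱ.le n) le_rfl).aestronglyMeasurable σ (hbdd n hn)
    have h := measure_exists_abs_sum_Ico_gt_le ℱ (ζ := fun j ω => γ j * ξ j ω i)
      (c := fun j => |γ j| * σ)
      (fun n hn => ((EuclideanSpace.proj (𝕜 := ℝ) i).measurable.comp (hmeas n hn)).const_mul _)
      (fun n => condExp_comp_clm_ae_eq_zero (hint (n + 1) (by omega)) (hmean n)
        (γ (n + 1) • EuclideanSpace.proj i))
      (fun n hn => (hbdd n hn).mono fun ω hω => by
        rw [abs_mul]
        exact mul_le_mul_of_nonneg_left ((PiLp.norm_apply_le _ i).trans hω) (abs_nonneg _))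
      hs hθ hθγ δ
    convert h using 5
    rw [mul_assoc, mul_sum]
    congr 1
    exact sum_congr rfl fun j _ => by rw [mul_pow, sq_abs, mul_comm]
  calc μ {ω | ∃ m ∈ Icc s e, d * δ < ‖∑ j ∈ Ico s m, γ j • ξ j ω‖}
      ≤ μ (⋃ i : Fin d, {ω | ∃ m ∈ Icc s e, δ < |∑ j ∈ Ico s m, γ j * ξ j ω i|}) := by
        refine measure_mono fun ω ⟨m, hm, hgt⟩ => ?_
        obtain ⟨i, hi⟩ := exists_lt_abs_apply_of_card_mul_lt_norm
          (by rwa [Fintype.card_fin] : Fintype.card (Fin d) * δ < _)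
        exact Set.mem_iUnion.2 ⟨i, m, hm, by simpa using hi⟩
    _ ≤ ∑ i : Fin d, μ {ω | ∃ m ∈ Icc s e, δ < |∑ j ∈ Ico s m, γ j * ξ j ω i|} :=
        measure_iUnion_fintype_le μ _
    _ ≤ _ := by
        refine (sum_le_sum fun i _ => hcoord i).trans_eq ?_
        rw [sum_const, card_univ, Fintype.card_fin, nsmul_eq_mul]
        ring

/-- With `θ := κ / γ g`, where `γ g` is the largest step of the block, the exponent is at most
`-(κ * δ / 2) / γ g`. -/
lemma measure_block_le_sum_rpow {γ : ℕ → ℝ} {s e : ℕ} (hs : 1 ≤ s) (hse : s < e)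
    (hγ : ∀ j ∈ Ico s e, 0 < γ j) {T₂ : ℝ} (hsum : ∑ j ∈ Ico s e, γ j ≤ T₂) {κ δ : ℝ}
    (hκ : 0 < κ) (hκσ : κ * σ ≤ 1) (hκδ : κ * σ ^ 2 * T₂ ≤ δ / 2) :
    μ {ω | ∃ m ∈ Icc s e, d * δ < ‖∑ j ∈ Ico s m, γ j • ξ j ω‖}
      ≤ 2 * d * ENNReal.ofReal (∑ j ∈ Ico s e, exp (-(κ * δ / 2)) ^ (1 / γ j)) := by
  obtain ⟨g, hg, hgmax⟩ := exists_max_image (Ico s e) γ (nonempty_Ico.2 hse)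
  have hγg := hγ g hg
  refine (measure_exists_norm_sum_Ico_gt_le ℱ hmeas hmean hbdd γ hs (θ := κ / γ g)
    (by positivity) (fun j hj => ?_) δ).trans ?_
  · rw [abs_of_pos (hγ j hj)]
    calc κ / γ g * (γ j * σ) = κ * σ * (γ j / γ g) := by ring
      _ ≤ κ * σ * 1 := by
          have hσ : 0 ≤ σ := by
            obtain ⟨ω, hω⟩ := (hbdd s hs).exists
            exact (norm_nonneg _).trans hω
          gcongr
          exact (div_le_one hγg).2 (hgmax j hj)
      _ ≤ 1 := by linarith
  gcongr
  refine le_trans ?_ (single_le_sum (fun j _ => rpow_nonneg (exp_pos _).le _) hg)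
  rw [← exp_mul, exp_le_exp]
  have hsq : ∑ j ∈ Ico s e, γ j ^ 2 ≤ γ g * T₂ :=
    calc ∑ j ∈ Ico s e, γ j ^ 2 ≤ ∑ j ∈ Ico s e, γ g * γ j :=
          sum_le_sum fun j hj => by nlinarith [hgmax j hj, hγ j hj]
      _ = γ g * ∑ j ∈ Ico s e, γ j := (mul_sum _ _ _).symm
      _ ≤ γ g * T₂ := by gcongr
  have hquad : (κ / γ g) ^ 2 * σ ^ 2 * ∑ j ∈ Ico s e, γ j ^ 2 ≤ κ / γ g * (δ / 2) :=
    calc (κ / γ g) ^ 2 * σ ^ 2 * ∑ j ∈ Ico s e, γ j ^ 2 ≤ (κ / γ g) ^ 2 * σ ^ 2 * (γ g * T₂) := by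
          gcongr
      _ = κ / γ g * (κ * σ ^ 2 * T₂) := by field_simp
      _ ≤ κ / γ g * (δ / 2) := by gcongr
  have : -(κ * δ / 2) * (1 / γ g) = -(κ / γ g * δ) + κ / γ g * (δ / 2) := by ring
  linarith

/-- Borel–Cantelli over the double blocks `[N k, N (k + 2))`: the bounds of
`measure_block_le_sum_rpow` are summable in `k` because every index lies in at most two double
blocks. -/
lemma ae_eventually_norm_sum_Ico_block_le (hσ : 0 < σ) {γ : ℕ → ℝ} (hγ : ∀ n, 1 ≤ n → 0 < γ n)
    (hγsum : ∀ l : ℝ, l ∈ Set.Ioo (0 : ℝ) 1 → Summable (fun n => l ^ (1 / γ n)))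
    {N : ℕ → ℕ} (hN : StrictMono N) (hN0 : 1 ≤ N 0) {T₂ : ℝ} (hT₂ : 0 < T₂)
    (hblock : ∀ k, ∑ j ∈ Ico (N k) (N (k + 2)), γ j ≤ T₂) {δ : ℝ} (hδ : 0 < δ) :
    ∀ᵐ ω ∂μ, ∀ᶠ k in atTop, ∀ m ∈ Icc (N k) (N (k + 2)),
      ‖∑ j ∈ Ico (N k) m, γ j • ξ j ω‖ ≤ d * δ := by
  have hN1 : ∀ k, 1 ≤ N k := fun k => hN0.trans (hN.monotone (Nat.zero_le k))
  obtain ⟨κ, hκ, hκσ, hκδ⟩ : ∃ κ : ℝ, 0 < κ ∧ κ * σ ≤ 1 ∧ κ * σ ^ 2 * T₂ ≤ δ / 2 := by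
    refine ⟨min (δ / (2 * σ ^ 2 * T₂)) (1 / σ), by positivity, ?_, ?_⟩
    · calc _ ≤ 1 / σ * σ := by gcongr; exact min_le_right _ _
        _ = 1 := by field_simp
    · calc _ ≤ δ / (2 * σ ^ 2 * T₂) * σ ^ 2 * T₂ := by gcongr; exact min_le_left _ _
        _ = δ / 2 := by field_simp
  set l := exp (-(κ * δ / 2))
  have hl : l ∈ Set.Ioo (0 : ℝ) 1 := ⟨exp_pos _, exp_lt_one_iff.2 (by nlinarith)⟩
  set p : ℕ → ℝ := fun k => ∑ j ∈ Ico (N k) (N (k + 2)), l ^ (1 / γ j)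
  have hp : Summable p := by
    have h := summable_sum_Ico_of_monotone (fun j => rpow_nonneg hl.1.le _) (hγsum l hl)
      hN.monotone
    refine (h.add ((summable_nat_add_iff 1).2 h)).congr fun k => ?_
    exact sum_Ico_consecutive _ (hN k.lt_succ_self).le (hN (k + 1).lt_succ_self).le
  have hfinite : ∑' k, μ {ω | ∃ m ∈ Icc (N k) (N (k + 2)),
      d * δ < ‖∑ j ∈ Ico (N k) m, γ j • ξ j ω‖} ≠ ⊤ := by
    refine ne_top_of_le_ne_top ?_ (ENNReal.tsum_le_tsum fun k =>
      measure_block_le_sum_rpow ℱ hmeas hmean hbdd (hN1 k) (hN (by omega))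
        (fun j hj => hγ j ((hN1 k).trans (mem_Ico.1 hj).1)) (hblock k) hκ hκσ hκδ)
    rw [ENNReal.tsum_mul_left, ← ENNReal.ofReal_tsum_of_nonneg
      (fun k => sum_nonneg fun j _ => rpow_nonneg hl.1.le _) hp]
    finiteness
  filter_upwards [ae_eventually_notMem hfinite] with ω hω
  exact hω.mono fun k hk m hm => not_lt.1 fun h => hk ⟨m, hm, h⟩

lemma ae_eventually_norm_sum_Ico_le (hσ : 0 < σ) {γ : ℕ → ℝ}
    (hγ : ∀ n, 1 ≤ n → γ n ∈ Set.Ioc (0 : ℝ) 1) (hγdiv : ¬ Summable γ)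
    (hγsum : ∀ l : ℝ, l ∈ Set.Ioo (0 : ℝ) 1 → Summable (fun n => l ^ (1 / γ n)))
    {T : ℝ} (hT : 0 ≤ T) {ε : ℝ} (hε : 0 < ε) :
    ∀ᵐ ω ∂μ, ∀ᶠ n in atTop, ∀ m, n ≤ m → ∑ j ∈ Ico n m, γ j ≤ T →
      ‖∑ j ∈ Ico n m, γ j • ξ j ω‖ ≤ ε := by
  obtain ⟨N, hN, hN0, hNsum⟩ := exists_blocks hγ hγdiv hT
  have hblock : ∀ k, ∑ j ∈ Ico (N k) (N (k + 2)), γ j ≤ 2 * (T + 1) := fun k => by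
    rw [← sum_Ico_consecutive _ (hN k.lt_succ_self).le (hN (k + 1).lt_succ_self).le]
    linarith [(hNsum k).2, (hNsum (k + 1)).2]
  set δ := ε / (2 * (d + 1))
  filter_upwards [ae_eventually_norm_sum_Ico_block_le ℱ hmeas hmean hbdd hσ
    (fun n hn => (hγ n hn).1) hγsum hN hN0 (by positivity) hblock (δ := δ) (by positivity)]
    with ω hω
  obtain ⟨K, hK⟩ := eventually_atTop.1 hω
  filter_upwards [eventually_ge_atTop (N K)] with n hn m hnm hwin
  obtain ⟨k, hKk, hkn, hnk, hmk⟩ := exists_block_of_sum_Ico_le hN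
    (fun j hj => (hγ j (hN0.trans hj)).1.le) (fun k => (hNsum k).1) hn hwin
  calc ‖∑ j ∈ Ico n m, γ j • ξ j ω‖
      = ‖∑ j ∈ Ico (N k) m, γ j • ξ j ω - ∑ j ∈ Ico (N k) n, γ j • ξ j ω‖ := by
        rw [← sum_Ico_consecutive _ hkn hnm, add_sub_cancel_left]
    _ ≤ d * δ + d * δ := (norm_sub_le _ _).trans (add_le_add
        (hK k hKk m (mem_Icc.2 ⟨hkn.trans hnm, hmk⟩)) (hK k hKk n (mem_Icc.2 ⟨hkn, hnk⟩)))
    _ = d / (d + 1) * ε := by simp only [δ]; field_simp; ring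
    _ ≤ ε := mul_le_of_le_one_left hε.le ((div_le_one (by positivity)).2 (by linarith))

end MartingaleDifferences

lemma tendsto_sSup_of_forall_eventually_le {S : ℕ → Set ℝ} (h0 : ∀ n, ∀ x ∈ S n, 0 ≤ x)
    (h : ∀ k : ℕ, ∀ᶠ n in atTop, ∀ x ∈ S n, x ≤ 1 / (k + 1)) :
    Tendsto (fun n => sSup (S n)) atTop (𝓝 0) := by
  rw [Metric.tendsto_atTop]
  intro ε hε
  obtain ⟨k, hk⟩ := exists_nat_one_div_lt hε
  obtain ⟨n₀, hn₀⟩ := eventually_atTop.1 (h k)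
  refine ⟨n₀, fun n hn => ?_⟩
  rw [Real.dist_eq, sub_zero, abs_of_nonneg (Real.sSup_nonneg (h0 n))]
  exact (Real.sSup_le (hn₀ n hn) (by positivity)).trans_lt hk

theorem stmt_7_general
    {Ω : Type*} {m0 : MeasurableSpace Ω} {μ : Measure Ω} [IsProbabilityMeasure μ]
    (ℱ : Filtration ℕ m0) {d : ℕ}
    (ξ : ℕ → Ω → EuclideanSpace ℝ (Fin d)) (σ : ℝ)
    (hmeas : ∀ n, 1 ≤ n → Measurable[ℱ n] (ξ n))
    (hmean : ∀ n : ℕ, μ[ξ (n + 1) | ℱ n] =ᵐ[μ] 0)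
    (hbdd : ∀ n, 1 ≤ n → ∀ᵐ ω ∂μ, ‖ξ n ω‖ ≤ σ)
    (γ : ℕ → ℝ) (hγ : ∀ n, 1 ≤ n → γ n ∈ Set.Ioc (0 : ℝ) 1)
    (hγdiv : ¬ Summable γ)
    (hγsum : ∀ l : ℝ, l ∈ Set.Ioo (0 : ℝ) 1 → Summable (fun n => l ^ (1 / γ n)))
    (τ : ℕ → ℝ) (hτ : ∀ n, τ n = ∑ j ∈ Finset.Ico 1 n, γ j)
    (T : ℝ) :
    ∀ᵐ ω ∂μ, Tendsto
      (fun n => sSup {x : ℝ | ∃ m, n ≤ m ∧ τ m - τ n ≤ T ∧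
        x = ‖∑ j ∈ Finset.Ico n m, γ j • ξ j ω‖})
      atTop (𝓝 0) := by
  have hτ_sub : ∀ n m, 1 ≤ n → n ≤ m → τ m - τ n = ∑ j ∈ Ico n m, γ j := fun n m hn hnm => by
    rw [hτ, hτ, ← sum_Ico_consecutive _ hn hnm, add_sub_cancel_left]
  have hwindows : ∀ k : ℕ, ∀ᵐ ω ∂μ, ∀ᶠ n in atTop, ∀ m, n ≤ m → τ m - τ n ≤ T →
      ‖∑ j ∈ Ico n m, γ j • ξ j ω‖ ≤ 1 / (k + 1) := fun k => by
    filter_upwards [ae_eventually_norm_sum_Ico_le ℱ hmeas hmean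
      (fun n hn => (hbdd n hn).mono fun ω h => h.trans (le_max_left σ 1))
      (lt_max_of_lt_right one_pos) hγ hγdiv hγsum (le_max_right T 0) (ε := 1 / (k + 1))
      (by positivity)] with ω hω
    filter_upwards [hω, eventually_ge_atTop 1] with n hn hn1 m hnm hwin
    exact hn m hnm ((hτ_sub n m hn1 hnm).symm.le.trans (hwin.trans (le_max_left T 0)))
  filter_upwards [ae_all_iff.2 hwindows] with ω hω
  refine tendsto_sSup_of_forall_eventually_le (by rintro n x ⟨m, -, -, rfl⟩; positivity)
    fun k => (hω k).mono fun n hn => ?_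
  rintro x ⟨m, hnm, hwin, rfl⟩
  exact hn m hnm hwin

/-- Probabilistic core of Theorem B.1: under the paper's step-size assumption,
the accumulated weighted noise over every time window of effective length at
most `T` vanishes almost surely. -/
theorem stmt_7
    {Ω : Type*} {m0 : MeasurableSpace Ω} {μ : Measure Ω} [IsProbabilityMeasure μ]
    (ℱ : Filtration ℕ m0) {d : ℕ}
    (ξ : ℕ → Ω → EuclideanSpace ℝ (Fin d)) (σ : ℝ)
    (hmeas : ∀ n, 1 ≤ n → Measurable[ℱ n] (ξ n))
    (hmean : ∀ n : ℕ, μ[ξ (n + 1) | ℱ n] =ᵐ[μ] 0)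
    (hbdd : ∀ n, 1 ≤ n → ∀ᵐ ω ∂μ, ‖ξ n ω‖ ≤ σ)
    (γ : ℕ → ℝ) (hγ : ∀ n, 1 ≤ n → γ n ∈ Set.Ioc (0 : ℝ) 1)
    (hγdiv : ¬ Summable γ)
    (hγsum : ∀ l : ℝ, l ∈ Set.Ioo (0 : ℝ) 1 → Summable (fun n => l ^ (1 / γ n)))
    (τ : ℕ → ℝ) (hτ : ∀ n, τ n = ∑ j ∈ Finset.Ico 1 n, γ j)
    (T : ℝ) (hT : 0 < T) :
    ∀ᵐ ω ∂μ, Tendsto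
      (fun n => sSup {x : ℝ | ∃ m, n ≤ m ∧ τ m - τ n ≤ T ∧
        x = ‖∑ j ∈ Finset.Ico n m, γ j • ξ j ω‖})
      atTop (𝓝 0) :=
  stmt_7_general ℱ ξ σ hmeas hmean hbdd γ hγ hγdiv hγsum τ hτ T
end

section
/- Let E be a finite-dimensional real inner product space, X ⊆ E open, and h : E → ℝ twice continuously differentiable on X. Fix x ∈ X, write ∇h for the gradient of h, and let H : E → E be the Hessian of h at x (the derivative of ∇h at x), assumed to be an invertible linear map. Suppose g : E → E is differentiable at ∇h(x) and satisfies g(∇h(y)) = y for all y in some neighborhood of x. Then for every v ∈ E, the curve c(t) := g( ∇h(x) + t·H v ) satisfies c(0) = x and c is differentiable at t = 0 with c′(0) = v. -/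
open Filter Topology

/-- The mirror-descent prox-step is a retraction to first order: the curve
`c(t) = g(∇h(x) + t·Hv)`, where `g` is a local inverse of `∇h` and `H` is the
(invertible) Hessian of `h` at `x`, satisfies `c(0) = x` and `c′(0) = v`. -/
theorem stmt_11 {E : Type*} [NormedAddCommGroup E] [InnerProductSpace ℝ E]
    [FiniteDimensional ℝ E]
    (X : Set E) (hX : IsOpen X) (h : E → ℝ) (hh : ContDiffOn ℝ 2 h X)
    (x : E) (hx : x ∈ X)
    (H : E →L[ℝ] E) (hH : HasFDerivAt (gradient h) H x)
    (hHinv : Function.Bijective H)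
    (g : E → E) (hg : DifferentiableAt ℝ g (gradient h x))
    (U : Set E) (hU : U ∈ nhds x) (hginv : ∀ y ∈ U, g (gradient h y) = y)
    (v : E) :
    (fun t : ℝ => g (gradient h x + t • H v)) 0 = x ∧
    HasDerivAt (fun t : ℝ => g (gradient h x + t • H v)) v 0 := by
  have hxU : x ∈ U := mem_of_mem_nhds hU
  set G := fderiv ℝ g (gradient h x) with hG
  -- composition g ∘ gradient h has derivative G ∘ H at x
  have hcomp : HasFDerivAt (g ∘ gradient h) (G.comp H) x :=
    (hg.hasFDerivAt).comp x hH
  -- it agrees with id near x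
  have heq : (g ∘ gradient h) =ᶠ[nhds x] id :=
    Filter.eventuallyEq_of_mem hU (fun y hy => hginv y hy)
  have hid : HasFDerivAt id (G.comp H) x := hcomp.congr_of_eventuallyEq heq.symm
  have hGH : G.comp H = ContinuousLinearMap.id ℝ E :=
    hid.unique (hasFDerivAt_id x)
  have hGHv : G (H v) = v := by
    have := congrArg (fun L : E →L[ℝ] E => L v) hGH
    simpa using this
  constructor
  · simpa using hginv x hxU
  · have hlin : HasDerivAt (fun t : ℝ => gradient h x + t • H v) (H v) 0 := by
      simpa using ((hasDerivAt_id (0:ℝ)).smul_const (H v)).const_add (gradient h x)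
    have : HasDerivAt (fun t : ℝ => g (gradient h x + t • H v)) (G (H v)) 0 := by
      have hg' : HasFDerivAt g G (gradient h x + (0:ℝ) • H v) := by
        simpa using hg.hasFDerivAt
      exact (hg'.comp_hasDerivAt 0 hlin)
    simpa [hGHv] using this
end

section
/- Let U ⊆ ℝ^D, let η : ℝ^D → ℝ, and fix x ∈ U at which η is differentiable with gradient ∇η(x). Assume: (a) there exist k > 0 and ρ > 0 with η(x + u) ≥ η(x) + ⟨∇η(x), u⟩ − k‖u‖² whenever ‖u‖ ≤ ρ; (b) ‖∇η(x)‖ ≤ L; and (c) ⟨∇η(x), F(x)⟩ ≥ β·η(x) for a map F : ℝ^D → ℝ^D and a constant β > 0. Let γ ∈ (0,1] and let ξ, b, r ∈ ℝ^D satisfy ‖F(x)‖ ≤ G, ‖ξ‖ ≤ σ, ‖b‖ ≤ Bγ, ‖r‖ ≤ Rγ², and ‖γ(F(x) + ξ + b) + r‖ ≤ ρ. Then, with x⁺ := x + γ(F(x) + ξ + b) + r and K := k(G + σ + B + R)² + L(B + R), one has η(x⁺) − η(x) ≥ γβ·η(x) + γ⟨∇η(x), ξ⟩ − Kγ². -/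
open Filter Topology
open scoped RealInnerProductSpace

set_option maxHeartbeats 2000000 in
/-- One-step Lyapunov drift inequality (B.36)–(B.37) for a Robbins–Monro step
`x⁺ = x + γ(F(x) + ξ + b) + r`. -/
theorem stmt_12 {D : ℕ}
    (U : Set (EuclideanSpace ℝ (Fin D)))
    (η : EuclideanSpace ℝ (Fin D) → ℝ)
    (x : EuclideanSpace ℝ (Fin D)) (hxU : x ∈ U)
    (gη : EuclideanSpace ℝ (Fin D)) (hgrad : HasGradientAt η gη x)
    (k ρ : ℝ) (hk : 0 < k) (hρ : 0 < ρ)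
    (hlow : ∀ u : EuclideanSpace ℝ (Fin D), ‖u‖ ≤ ρ →
      η (x + u) ≥ η x + ⟪gη, u⟫ - k * ‖u‖ ^ 2)
    (L : ℝ) (hL : ‖gη‖ ≤ L)
    (F : EuclideanSpace ℝ (Fin D) → EuclideanSpace ℝ (Fin D))
    (β : ℝ) (hβ : 0 < β) (hdrift : ⟪gη, F x⟫ ≥ β * η x)
    (γ : ℝ) (hγ : γ ∈ Set.Ioc (0 : ℝ) 1)
    (ξ b r : EuclideanSpace ℝ (Fin D))
    (G σ B R : ℝ)
    (hF : ‖F x‖ ≤ G) (hξ : ‖ξ‖ ≤ σ) (hb : ‖b‖ ≤ B * γ) (hr : ‖r‖ ≤ R * γ ^ 2)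
    (hstep : ‖γ • (F x + ξ + b) + r‖ ≤ ρ) :
    η (x + γ • (F x + ξ + b) + r) - η x ≥
      γ * β * η x + γ * ⟪gη, ξ⟫ -
        (k * (G + σ + B + R) ^ 2 + L * (B + R)) * γ ^ 2 := by
  obtain ⟨hγ0, hγ1⟩ := hγ
  set u := γ • (F x + ξ + b) + r with hu
  have hL0 : (0:ℝ) ≤ L := le_trans (norm_nonneg _) hL
  have hG0 : (0:ℝ) ≤ G := le_trans (norm_nonneg _) hF
  have hσ0 : (0:ℝ) ≤ σ := le_trans (norm_nonneg _) hξ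
  have hB0 : (0:ℝ) ≤ B := by nlinarith [norm_nonneg b, hγ0]
  have hR0 : (0:ℝ) ≤ R := by nlinarith [norm_nonneg r, pow_pos hγ0 2]
  have hxu : x + γ • (F x + ξ + b) + r = x + u := by rw [hu, add_assoc]
  have h1 := hlow u hstep
  have hiu : ⟪gη, u⟫ = γ * ⟪gη, F x⟫ + γ * ⟪gη, ξ⟫ + γ * ⟪gη, b⟫ + ⟪gη, r⟫ := by
    rw [hu, inner_add_right, real_inner_smul_right, inner_add_right, inner_add_right]; ring
  have hnb : |⟪gη, b⟫| ≤ L * (B * γ) :=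
    (abs_real_inner_le_norm gη b).trans
      (mul_le_mul hL hb (norm_nonneg _) hL0)
  have hnr : |⟪gη, r⟫| ≤ L * (R * γ ^ 2) :=
    (abs_real_inner_le_norm gη r).trans
      (mul_le_mul hL hr (norm_nonneg _) hL0)
  have hnu : ‖u‖ ≤ (G + σ + B + R) * γ := by
    have h2 : ‖u‖ ≤ ‖γ • (F x + ξ + b)‖ + ‖r‖ := norm_add_le _ _
    have h3 : ‖γ • (F x + ξ + b)‖ = γ * ‖F x + ξ + b‖ := by
      rw [norm_smul, Real.norm_eq_abs, abs_of_pos hγ0]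
    have h4 : ‖F x + ξ + b‖ ≤ ‖F x‖ + ‖ξ‖ + ‖b‖ := norm_add₃_le
    nlinarith [norm_nonneg (F x + ξ + b), mul_le_mul_of_nonneg_left h4 hγ0.le,
      mul_nonneg (mul_nonneg hB0 hγ0.le) (sub_nonneg.mpr hγ1),
      mul_nonneg (mul_nonneg hR0 hγ0.le) (sub_nonneg.mpr hγ1)]
  have hku : k * ‖u‖ ^ 2 ≤ k * (G + σ + B + R) ^ 2 * γ ^ 2 := by
    nlinarith [mul_self_le_mul_self (norm_nonneg u) hnu, hk.le, sq_nonneg ‖u‖]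
  have habsb := (abs_le.mp hnb).1
  have habsr := (abs_le.mp hnr).1
  have hd := mul_le_mul_of_nonneg_left hdrift hγ0.le
  rw [hxu]
  have hbγ := mul_le_mul_of_nonneg_left habsb hγ0.le
  linarith only [h1, hiu, hku, hbγ, habsr, hd]
end

section
/- Let (Ω, 𝓕, ℙ) be a probability space and 𝒢 ⊆ 𝓕 a sub-σ-algebra. Let ξ be an ℝ^D-valued random vector such that 𝔼[(⟨ξ, v⟩)₊ | 𝒢] ≥ c almost surely for every 𝒢-measurable random unit vector v, where c > 0. Let g be a 𝒢-measurable random vector with ‖g‖ ≥ c₁ > 0 almost surely, let γ, K > 0 be constants, and let Y be a random variable with Y ≥ γ⟨g, ξ⟩ − Kγ² almost surely. Then 𝔼[Y₊ | 𝒢] ≥ c₁cγ − Kγ² almost surely, and consequently 𝔼[Y² | 𝒢] ≥ ( (c₁cγ − Kγ²)₊ )² almost surely. -/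
/-!
Normalise `g` to a `𝒢`-measurable unit vector `v = g / ‖g‖`, so that excitability gives
`c ≤ 𝔼[⟨ξ, v⟩₊ | 𝒢]`. Pointwise `c₁ γ ⟨ξ, v⟩₊ ≤ γ ⟨g, ξ⟩₊ ≤ Y₊ + K γ²`, and monotonicity of the
conditional expectation turns this into `c₁ c γ - K γ² ≤ 𝔼[Y₊ | 𝒢]`. With `b = (c₁ c γ - K γ²)₊`,
the same argument applied to the pointwise inequality `2 b Y₊ ≤ Y² + b²` gives `b² ≤ 𝔼[Y² | 𝒢]`.
-/

open MeasureTheory Filter Topology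
open scoped RealInnerProductSpace

section UnitVector

variable {E : Type*} [NormedAddCommGroup E] [NormedSpace ℝ E] [MeasurableSpace E] [BorelSpace E]
  [SecondCountableTopology E]

lemma exists_measurable_unit_eq_normalize [Nontrivial E] {Ω : Type*} {m : MeasurableSpace Ω}
    {g : Ω → E} (hg : Measurable g) :
    ∃ v : Ω → E, Measurable v ∧ (∀ ω, ‖v ω‖ = 1) ∧ ∀ ω, g ω ≠ 0 → v ω = ‖g ω‖⁻¹ • g ω := by
  classical
  obtain ⟨e, he⟩ := exists_norm_eq E zero_le_one
  refine ⟨fun ω => if g ω = 0 then e else ‖g ω‖⁻¹ • g ω,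
    Measurable.ite (hg (measurableSet_singleton 0)) measurable_const (hg.norm.inv.smul hg),
    fun ω => ?_, fun ω hω => if_neg hω⟩
  by_cases h : g ω = 0
  · simp [h, he]
  · simp [h, norm_smul]

end UnitVector

lemma norm_mul_max_inner_normalize {E : Type*} [NormedAddCommGroup E] [InnerProductSpace ℝ E]
    (x : E) {g : E} (hg : g ≠ 0) :
    ‖g‖ * max ⟪x, ‖g‖⁻¹ • g⟫ 0 = max ⟪g, x⟫ 0 := by
  rw [real_inner_smul_right, mul_max_of_nonneg _ _ (norm_nonneg g), mul_zero,
    ← mul_assoc, mul_inv_cancel₀ (norm_ne_zero_iff.mpr hg), one_mul, real_inner_comm]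

lemma mul_max_inner_normalize_le_max_add {E : Type*} [NormedAddCommGroup E]
    [InnerProductSpace ℝ E] {x g : E} {y c₁ γ r : ℝ} (hg : g ≠ 0) (hc₁ : c₁ ≤ ‖g‖)
    (hγ : 0 ≤ γ) (hr : 0 ≤ r) (hy : γ * ⟪g, x⟫ - r ≤ y) :
    c₁ * γ * max ⟪x, ‖g‖⁻¹ • g⟫ 0 ≤ max y 0 + r :=
  calc c₁ * γ * max ⟪x, ‖g‖⁻¹ • g⟫ 0
      ≤ γ * (‖g‖ * max ⟪x, ‖g‖⁻¹ • g⟫ 0) := by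
        rw [mul_comm c₁ γ, mul_assoc]; gcongr
    _ = max (γ * ⟪g, x⟫) 0 := by
        rw [norm_mul_max_inner_normalize x hg, mul_max_of_nonneg _ _ hγ, mul_zero]
    _ ≤ max (y + r) 0 := max_le_max_right 0 (by linarith)
    _ ≤ max y 0 + r := max_le (by gcongr; exact le_max_left _ _) (by positivity)

section CondExp

variable {Ω : Type*} {m m0 : MeasurableSpace Ω} {μ : Measure Ω}

lemma integrable_of_pos_le_condExp [(ae μ).NeBot] {Z : Ω → ℝ} {c : ℝ} (hc : 0 < c)
    (hZ : ∀ᵐ ω ∂μ, c ≤ μ[Z | m] ω) : Integrable Z μ := by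
  by_contra hZint
  rw [condExp_of_not_integrable hZint] at hZ
  obtain ⟨ω, hω⟩ := hZ.exists
  exact (hω.trans_lt hc).false

lemma sub_le_condExp_of_mul_le_add [IsFiniteMeasure μ] (hm : m ≤ m0) {Z W : Ω → ℝ} {a b c : ℝ}
    (ha : 0 ≤ a) (hZ : Integrable Z μ) (hW : Integrable W μ) (hZW : ∀ᵐ ω ∂μ, a * Z ω ≤ W ω + b)
    (hc : ∀ᵐ ω ∂μ, c ≤ μ[Z | m] ω) :
    ∀ᵐ ω ∂μ, a * c - b ≤ μ[W | m] ω := by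
  have hmono : μ[a • Z | m] ≤ᵐ[μ] μ[W + fun _ => b | m] :=
    condExp_mono (hZ.const_mul a) (hW.add (integrable_const b)) hZW
  have hadd : μ[W + fun _ => b | m] =ᵐ[μ] μ[W | m] + fun _ => b := by
    simpa only [condExp_const hm b] using condExp_add hW (integrable_const b) m
  filter_upwards [hmono, condExp_smul a Z m, hadd, hc] with ω hω hsmulω haddω hcω
  simp only [hsmulω, haddω, Pi.smul_apply, Pi.add_apply, smul_eq_mul] at hω
  linarith [mul_le_mul_of_nonneg_left hcω ha]

end CondExp

lemma two_mul_max_le_sq_add_sq (b y : ℝ) : 2 * b * max y 0 ≤ y ^ 2 + b ^ 2 := by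
  rcases le_total y 0 with h | h
  · rw [max_eq_right h, mul_zero]; positivity
  · rw [max_eq_left h]; nlinarith [sq_nonneg (y - b)]

/-- Inequalities (B.39)–(B.45): uniform excitability of the noise combined with
the drift inequality yields the conditional second-moment lower bound. -/
theorem stmt_13
    {Ω : Type*} {m0 : MeasurableSpace Ω} {μ : Measure Ω} [IsProbabilityMeasure μ]
    {m : MeasurableSpace Ω} (hm : m ≤ m0) {D : ℕ}
    (ξ : Ω → EuclideanSpace ℝ (Fin D))
    (c : ℝ) (hc : 0 < c)
    (hexcite : ∀ v : Ω → EuclideanSpace ℝ (Fin D),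
      Measurable[m] v → (∀ ω, ‖v ω‖ = 1) →
      ∀ᵐ ω ∂μ, c ≤ (μ[fun ω' => max (⟪ξ ω', v ω'⟫) 0 | m]) ω)
    (g : Ω → EuclideanSpace ℝ (Fin D)) (hgmeas : Measurable[m] g)
    (c₁ : ℝ) (hc₁ : 0 < c₁) (hg : ∀ᵐ ω ∂μ, c₁ ≤ ‖g ω‖)
    (γ K : ℝ) (hγ : 0 < γ) (hK : 0 < K)
    (Y : Ω → ℝ) (hYint : Integrable Y μ)
    (hY2int : Integrable (fun ω => Y ω ^ 2) μ)
    (hYlow : ∀ᵐ ω ∂μ, Y ω ≥ γ * ⟪g ω, ξ ω⟫ - K * γ ^ 2) :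
    (∀ᵐ ω ∂μ, c₁ * c * γ - K * γ ^ 2 ≤ (μ[fun ω' => max (Y ω') 0 | m]) ω) ∧
    (∀ᵐ ω ∂μ, (max (c₁ * c * γ - K * γ ^ 2) 0) ^ 2 ≤ (μ[fun ω' => Y ω' ^ 2 | m]) ω) := by
  obtain ⟨ω₀, hω₀⟩ := hg.exists
  have : Nontrivial (EuclideanSpace ℝ (Fin D)) :=
    ⟨g ω₀, 0, norm_pos_iff.mp (hc₁.trans_le hω₀)⟩
  obtain ⟨v, hv_meas, hv_norm, hv_eq⟩ := exists_measurable_unit_eq_normalize hgmeas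
  have hexc := hexcite v hv_meas hv_norm
  have hpt : ∀ᵐ ω ∂μ, c₁ * γ * max ⟪ξ ω, v ω⟫ 0 ≤ max (Y ω) 0 + K * γ ^ 2 := by
    filter_upwards [hg, hYlow] with ω hgω hYω
    have hg0 : g ω ≠ 0 := norm_pos_iff.mp (hc₁.trans_le hgω)
    rw [hv_eq ω hg0]
    exact mul_max_inner_normalize_le_max_add hg0 hgω hγ.le (by positivity) hYω
  have hfirst := sub_le_condExp_of_mul_le_add hm (by positivity)
    (integrable_of_pos_le_condExp hc hexc) hYint.pos_part hpt hexc
  simp only [mul_right_comm c₁ γ c] at hfirst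
  refine ⟨hfirst, ?_⟩
  set b := max (c₁ * c * γ - K * γ ^ 2) 0
  have hb : ∀ᵐ ω ∂μ, b ≤ μ[fun ω' => max (Y ω') 0 | m] ω := by
    filter_upwards [hfirst, condExp_nonneg (.of_forall fun ω => le_max_right (Y ω) 0)]
      with ω h₁ h₂ using max_le h₁ h₂
  have hsecond := sub_le_condExp_of_mul_le_add hm (by positivity) hYint.pos_part hY2int
    (.of_forall fun ω => two_mul_max_le_sq_add_sq b (Y ω)) hb
  filter_upwards [hsecond] with ω h
  linarith
end
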